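/- Let s and t be two indices with data as in the context, let c ∈ ℝ, and suppose W: X_s × X_t → ℝ is given by W(x,y) = π_s(x)π_t(y) + ζ_s(x)·c·ζ_t(y). Then for all x ∈ X_s and y ∈ X_t: π̃_s(x)π̃_t(y)(x−μ̃_s)·c·(y−μ̃_t) = σ̃²_s σ̃²_t · [ W(x,y)·W(≠x,≠y) − W(x,≠y)·W(≠x,y) ], where W(x,≠y) = ∑_{y'∈X_t, y'≠y} W(x,y'), W(≠x,y) = ∑_{x'∈X_s, x'≠x} W(x',y), and W(≠x,≠y) = ∑_{x'≠x, y'≠y} W(x',y'). -/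

import Mathlib

open Finset

/-- `μ̃`, the mean of the pmf `p` on the finite state space `X`. -/
noncomputable def muF (X : Finset ℝ) (p : ℝ → ℝ) : ℝ := ∑ x ∈ X, p x * x

/-- `σ̃²`, the variance of the pmf `p` on `X`. -/
noncomputable def sig2F (X : Finset ℝ) (p : ℝ → ℝ) : ℝ := ∑ x ∈ X, p x * (x - muF X p) ^ 2

/-- `ζ(x) = π̃(x)(x − μ̃)/σ̃²`. -/
noncomputable def zetaF (X : Finset ℝ) (p : ℝ → ℝ) (x : ℝ) : ℝ :=
  p x * (x - muF X p) / sig2F X p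

/-!
The quantity `W(x,y)·W(≠x,≠y) − W(x,≠y)·W(≠x,y)` is the determinant of the 2×2 table obtained by
collapsing `W` to `{x, ≠x} × {y, ≠y}`. By inclusion–exclusion it equals `W(x,y)·N − r(x)·k(y)`,
where `N` is the total mass and `r`, `k` are the row and column sums. For
`W = π_s ⊗ π_t + (c ζ_s) ⊗ ζ_t` the perturbation has vanishing marginals (`∑ ζ = 0`), so
`N = 1`, `r = π_s`, `k = π_t`, and the determinant is `c ζ_s(x) ζ_t(y)`; multiplying by
`σ̃²_s σ̃²_t` clears the denominators of `ζ`.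
-/

section Collapse

variable {α β R : Type*} [CommRing R] [DecidableEq α] [DecidableEq β]

theorem det_collapse_eq (S : Finset α) (T : Finset β) (W : α → β → R) {x : α} (hx : x ∈ S)
    {y : β} (hy : y ∈ T) :
    W x y * (∑ x' ∈ S.erase x, ∑ y' ∈ T.erase y, W x' y') -
        (∑ y' ∈ T.erase y, W x y') * (∑ x' ∈ S.erase x, W x' y) =
      W x y * (∑ x' ∈ S, ∑ y' ∈ T, W x' y') - (∑ y' ∈ T, W x y') * (∑ x' ∈ S, W x' y) := by
  have hinner : ∀ x', ∑ y' ∈ T.erase y, W x' y' = ∑ y' ∈ T, W x' y' - W x' y :=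
    fun x' => sum_erase_eq_sub hy
  simp only [hinner, sum_sub_distrib, sum_erase_eq_sub hx]
  ring

theorem det_collapse_of_eq_mul_add_mul (S : Finset α) (T : Finset β) (W : α → β → R)
    {a u : α → R} {b v : β → R} (ha : ∑ x ∈ S, a x = 1) (hu : ∑ x ∈ S, u x = 0)
    (hb : ∑ y ∈ T, b y = 1) (hv : ∑ y ∈ T, v y = 0)
    (hW : ∀ x ∈ S, ∀ y ∈ T, W x y = a x * b y + u x * v y) {x : α} (hx : x ∈ S)
    {y : β} (hy : y ∈ T) :
    W x y * (∑ x' ∈ S.erase x, ∑ y' ∈ T.erase y, W x' y') -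
        (∑ y' ∈ T.erase y, W x y') * (∑ x' ∈ S.erase x, W x' y) = u x * v y := by
  have hrow : ∀ x' ∈ S, ∑ y' ∈ T, W x' y' = a x' := fun x' hx' => by
    rw [sum_congr rfl (hW x' hx'), sum_add_distrib, ← mul_sum, ← mul_sum, hb, hv]
    ring
  have hcol : ∑ x' ∈ S, W x' y = b y := by
    rw [sum_congr rfl (fun x' hx' => hW x' hx' y hy), sum_add_distrib, ← sum_mul, ← sum_mul,
      ha, hu]
    ring
  rw [det_collapse_eq S T W hx hy, sum_congr rfl hrow, ha, hrow x hx, hcol, hW x hx y hy]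
  ring

end Collapse

theorem sum_mul_sub_muF_eq_zero (X : Finset ℝ) {p : ℝ → ℝ} (hp : ∑ x ∈ X, p x = 1) :
    ∑ x ∈ X, p x * (x - muF X p) = 0 := by
  simp only [mul_sub, sum_sub_distrib, ← sum_mul, hp, one_mul, muF, sub_self]

theorem sum_zetaF_eq_zero (X : Finset ℝ) {p : ℝ → ℝ} (hp : ∑ x ∈ X, p x = 1) :
    ∑ x ∈ X, zetaF X p x = 0 := by
  simp only [zetaF]
  rw [← sum_div, sum_mul_sub_muF_eq_zero X hp, zero_div]

theorem sig2F_mul_zetaF (X : Finset ℝ) {p : ℝ → ℝ} (hp : ∀ x ∈ X, 0 ≤ p x) {x : ℝ}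
    (hx : x ∈ X) : sig2F X p * zetaF X p x = p x * (x - muF X p) := by
  rcases eq_or_ne (sig2F X p) 0 with h | h
  · have hterm : p x * (x - muF X p) ^ 2 = 0 :=
      (sum_eq_zero_iff_of_nonneg fun x' hx' => mul_nonneg (hp x' hx') (sq_nonneg _)).mp h x hx
    rw [h, zero_mul]
    rcases mul_eq_zero.mp hterm with h0 | h0
    · rw [h0, zero_mul]
    · rw [pow_eq_zero_iff two_ne_zero |>.mp h0, mul_zero]
  · exact mul_div_cancel₀ _ h

theorem stmt7_general (Xs Xt : Finset ℝ) (πs πt pts ptt : ℝ → ℝ) (c : ℝ) (W : ℝ → ℝ → ℝ)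
    (hπs_sum : ∑ x ∈ Xs, πs x = 1)
    (hπt_sum : ∑ y ∈ Xt, πt y = 1)
    (hpts_nn : ∀ x ∈ Xs, 0 ≤ pts x) (hpts_sum : ∑ x ∈ Xs, pts x = 1)
    (hptt_nn : ∀ y ∈ Xt, 0 ≤ ptt y) (hptt_sum : ∑ y ∈ Xt, ptt y = 1)
    (hW : ∀ x ∈ Xs, ∀ y ∈ Xt,
      W x y = πs x * πt y + zetaF Xs pts x * c * zetaF Xt ptt y) :
    ∀ x ∈ Xs, ∀ y ∈ Xt,
      pts x * ptt y * (x - muF Xs pts) * c * (y - muF Xt ptt) =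
        sig2F Xs pts * sig2F Xt ptt *
          (W x y * (∑ x' ∈ Xs.erase x, ∑ y' ∈ Xt.erase y, W x' y') -
            (∑ y' ∈ Xt.erase y, W x y') * (∑ x' ∈ Xs.erase x, W x' y)) := by
  intro x hx y hy
  have hζs : ∑ x' ∈ Xs, zetaF Xs pts x' * c = 0 := by
    rw [← sum_mul, sum_zetaF_eq_zero Xs hpts_sum, zero_mul]
  rw [det_collapse_of_eq_mul_add_mul Xs Xt W hπs_sum hζs hπt_sum (sum_zetaF_eq_zero Xt hptt_sum)
    hW hx hy]
  linear_combination (-c * ptt y * (y - muF Xt ptt)) * sig2F_mul_zetaF Xs hpts_nn hx -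
    c * sig2F Xs pts * zetaF Xs pts x * sig2F_mul_zetaF Xt hptt_nn hy

theorem stmt7 (Xs Xt : Finset ℝ) (πs πt pts ptt : ℝ → ℝ) (c : ℝ) (W : ℝ → ℝ → ℝ)
    (hXs : Xs.Nonempty) (hXt : Xt.Nonempty)
    (hπs_pos : ∀ x ∈ Xs, 0 < πs x) (hπs_sum : ∑ x ∈ Xs, πs x = 1)
    (hπt_pos : ∀ y ∈ Xt, 0 < πt y) (hπt_sum : ∑ y ∈ Xt, πt y = 1)
    (hpts_nn : ∀ x ∈ Xs, 0 ≤ pts x) (hpts_sum : ∑ x ∈ Xs, pts x = 1)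
    (hpts_nd : 1 < (Xs.filter fun x => pts x ≠ 0).card)
    (hptt_nn : ∀ y ∈ Xt, 0 ≤ ptt y) (hptt_sum : ∑ y ∈ Xt, ptt y = 1)
    (hptt_nd : 1 < (Xt.filter fun y => ptt y ≠ 0).card)
    (hW : ∀ x ∈ Xs, ∀ y ∈ Xt,
      W x y = πs x * πt y + zetaF Xs pts x * c * zetaF Xt ptt y) :
    ∀ x ∈ Xs, ∀ y ∈ Xt,
      pts x * ptt y * (x - muF Xs pts) * c * (y - muF Xt ptt) =
        sig2F Xs pts * sig2F Xt ptt *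
          (W x y * (∑ x' ∈ Xs.erase x, ∑ y' ∈ Xt.erase y, W x' y') -
            (∑ y' ∈ Xt.erase y, W x y') * (∑ x' ∈ Xs.erase x, W x' y)) :=
  stmt7_general Xs Xt πs πt pts ptt c W hπs_sum hπt_sum hpts_nn hpts_sum hptt_nn hptt_sum hW
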